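/- Let 1 ≤ d_1 < … < d_s ≤ n−1 and let V_1,…,V_s be subspaces of ℂ^n with dim V_l = d_l satisfying pr_{d_l+1, d_{l+1}}(V_l) ⊆ V_{l+1} for l = 1,…,s−1. For each l, let I^l ⊆ {1,…,n} be the pivot set of V_l, i.e. the set of entries of the unique increasing tuple L (with d = d_l) such that V_l has a basis of the normal form e_j = v_{l_j} + Σ_{i ∈ F_j(L)} a_{i,j} v_i, j = 1,…,d_l. Then I^l \ {d_l+1,…,d_{l+1}} ⊆ I^{l+1} for all l = 1,…,s−1. -/
import Mathlib


/-- The projection `pr_{a,b} : ℂⁿ → ℂⁿ` setting the (1-based) coordinates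
`a, …, b` to zero; if `a > b` it is the identity. -/
noncomputable def pr (n a b : ℕ) : (Fin n → ℂ) →ₗ[ℂ] (Fin n → ℂ) :=
  LinearMap.pi fun i : Fin n =>
    if a ≤ (i : ℕ) + 1 ∧ (i : ℕ) + 1 ≤ b then 0 else LinearMap.proj i

/-- The standard basis vector `v_m` of `ℂⁿ` (1-based: `v_m` has a `1` in the
`m`-th position, `1 ≤ m ≤ n`, and is zero elsewhere). -/
noncomputable def stdv (n m : ℕ) : Fin n → ℂ := fun i => if (i : ℕ) + 1 = m then 1 else 0

/-- The set of free positions `F_j(L)` attached to an increasing tuple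
`L = (l_1 < … < l_d)` in `{1, …, n}`:
`F_j(L) = ({1, …, l_j - 1} ∪ {d+1, …, n}) \ {l_1, …, l_d}` if `l_j ≤ d`, and
`F_j(L) = {d+1, …, l_j - 1} \ {l_1, …, l_d}` if `l_j > d`. -/
def freePos (n d : ℕ) (l : Fin d → ℕ) (j : Fin d) : Finset ℕ :=
  (if l j ≤ d then Finset.Ico 1 (l j) ∪ Finset.Icc (d + 1) n
   else Finset.Ico (d + 1) (l j)) \ Finset.image l Finset.univ

/-- rank of a 1-based position in the order d+1 < … < n < 1 < … < d -/
def rk (n d i : ℕ) : ℕ := if i ≤ d then i + n else i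

lemma rk_freePos {n d : ℕ} {l : Fin d → ℕ} {j : Fin d} (hj : 1 ≤ l j) {i : ℕ}
    (hi : i ∈ freePos n d l j) : rk n d i < rk n d (l j) := by
  simp only [freePos, Finset.mem_sdiff] at hi
  obtain ⟨hi, -⟩ := hi
  unfold rk
  split_ifs at hi ⊢ with h1 h2 h3 h2 h3
  all_goals simp only [Finset.mem_union, Finset.mem_Ico, Finset.mem_Icc] at hi
  all_goals omega

lemma freePos_not_pivot {n d : ℕ} {l : Fin d → ℕ} {j k : Fin d} {i : ℕ}
    (hi : i ∈ freePos n d l j) : i ≠ l k := by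
  simp only [freePos, Finset.mem_sdiff, Finset.mem_image] at hi
  intro h
  exact hi.2 ⟨k, Finset.mem_univ k, h.symm⟩

lemma pr_apply (n a b : ℕ) (f : Fin n → ℂ) (i : Fin n) :
    pr n a b f i = if a ≤ (i : ℕ) + 1 ∧ (i : ℕ) + 1 ≤ b then 0 else f i := by
  show (LinearMap.pi _ : _) f i = _
  rw [LinearMap.pi_apply]
  rw [apply_ite (fun g : (Fin n → ℂ) →ₗ[ℂ] ℂ => g f)]
  simp

lemma normal_coord {n : ℕ} (q : ℕ) (F : Finset ℕ) (b : ℕ → ℂ) (idx : Fin n) :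
    (stdv n q + ∑ i ∈ F, b i • stdv n i) idx =
      (if (idx : ℕ) + 1 = q then 1 else 0) +
      (if (idx : ℕ) + 1 ∈ F then b ((idx : ℕ) + 1) else 0) := by
  simp only [Pi.add_apply, Finset.sum_apply, Pi.smul_apply, stdv, smul_eq_mul,
    mul_ite, mul_one, mul_zero]
  congr 1
  rw [Finset.sum_ite_eq F ((idx : ℕ) + 1) b]

/-- Leading-term lemma: a vector in the span of a normal-form family whose
coordinate at position `m` is nonzero and which vanishes at all positions of
larger rank must have `m` among the pivots. -/
lemma leading_pivot {n D : ℕ} (d' : ℕ) (p : Fin D → ℕ) (hp : Function.Injective p)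
    (F : Fin D → Finset ℕ) (hF : ∀ k, ∀ i ∈ F k, rk n d' i < rk n d' (p k))
    (hFp : ∀ k, ∀ i ∈ F k, ∀ k', i ≠ p k')
    (a : ℕ → Fin D → ℂ) (w : Fin n → ℂ)
    (hw : w ∈ Submodule.span ℂ (Set.range fun k =>
      stdv n (p k) + ∑ i ∈ F k, a i k • stdv n i))
    (m : ℕ) (im : Fin n) (him : (im : ℕ) + 1 = m) (hm : w im ≠ 0)
    (hvan : ∀ i : Fin n, rk n d' m < rk n d' ((i : ℕ) + 1) → w i = 0)
    (hpbd : ∀ k, 1 ≤ p k ∧ p k ≤ n) :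
    ∃ k, p k = m := by
  obtain ⟨c, hc⟩ := (Submodule.mem_span_range_iff_exists_fun ℂ).1 hw
  have hwcoord : ∀ idx : Fin n, w idx = ∑ k, c k *
      ((if (idx : ℕ) + 1 = p k then 1 else 0) +
       (if (idx : ℕ) + 1 ∈ F k then a ((idx : ℕ) + 1) k else 0)) := by
    intro idx
    rw [← hc]
    simp only [Finset.sum_apply, Pi.smul_apply, smul_eq_mul]
    exact Finset.sum_congr rfl fun k _ => by rw [normal_coord]
  -- K : set of nonzero coefficients
  set K : Finset (Fin D) := Finset.univ.filter (fun k => c k ≠ 0) with hK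
  have hKne : K.Nonempty := by
    by_contra hne
    apply hm
    rw [hwcoord im]
    apply Finset.sum_eq_zero
    intro k _
    have : c k = 0 := by
      by_contra hck
      exact hne ⟨k, by simp [hK, hck]⟩
    simp [this]
  obtain ⟨k₀, hk₀K, hk₀max⟩ := K.exists_max_image (fun k => rk n d' (p k)) hKne
  have hck₀ : c k₀ ≠ 0 := by simpa [hK] using hk₀K
  -- coordinate of w at position p k₀ is c k₀
  have hk₀1 : 1 ≤ p k₀ := (hpbd k₀).1
  have hk₀n : p k₀ ≤ n := (hpbd k₀).2
  set ip : Fin n := ⟨p k₀ - 1, by omega⟩ with hip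
  have hip1 : (ip : ℕ) + 1 = p k₀ := by simp [hip]; omega
  have hwp : w ip = c k₀ := by
    rw [hwcoord ip, hip1]
    rw [Finset.sum_eq_single k₀]
    · have : p k₀ ∉ F k₀ := fun h => hFp k₀ _ h k₀ rfl
      simp [this]
    · intro k _ hk
      have h1 : p k₀ ≠ p k := fun h => hk ((hp h.symm) ▸ rfl)
      have h2 : p k₀ ∉ F k := fun h => hFp k _ h k₀ rfl
      simp [h1, h2]
    · intro h; exact absurd (Finset.mem_univ k₀) h
  -- hence rk (p k₀) ≤ rk m
  have hrk₀ : rk n d' (p k₀) ≤ rk n d' m := by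
    by_contra hlt
    exact hck₀ (hwp ▸ hvan ip (by rw [hip1]; omega))
  -- m must be a pivot of some k with c k ≠ 0
  by_contra hno
  push_neg at hno
  apply hm
  rw [hwcoord im]
  apply Finset.sum_eq_zero
  intro k _
  rcases eq_or_ne (c k) 0 with hck | hck
  · simp [hck]
  · have h1 : (im : ℕ) + 1 ≠ p k := by rw [him]; exact fun h => hno k h.symm
    have h2 : (im : ℕ) + 1 ∉ F k := by
      rw [him]
      intro hmem
      have := hF k m hmem
      have : rk n d' (p k) ≤ rk n d' (p k₀) := hk₀max k (by simp [hK, hck])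
      omega
    simp [h1, h2]

/-- key arithmetic: positions outside `(d, d']` compare the same way in the
orders attached to `d` and to `d'`. -/
lemma rk_mono (n d d' i x : ℕ) (hdd : d < d') (hi1 : 1 ≤ i) (hin : i ≤ n)
    (hx1 : 1 ≤ x) (hxn : x ≤ n) (hi : i ≤ d ∨ d' < i) (hx : x ≤ d ∨ d' < x)
    (h : rk n d i < rk n d x) : rk n d' i < rk n d' x := by
  unfold rk at h ⊢
  split_ifs at h ⊢ <;> omega

/-- One step of the chain condition, with clean binders. -/
lemma chain_step (n dl0 dl1 : ℕ)
    (t0 : Fin dl0 → ℕ) (t1 : Fin dl1 → ℕ)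
    (a0 : ℕ → Fin dl0 → ℂ) (a1 : ℕ → Fin dl1 → ℂ)
    (V1 : Submodule ℂ (Fin n → ℂ))
    (hdd : dl0 < dl1)
    (hinj1 : Function.Injective t1)
    (hbd0 : ∀ j, 1 ≤ t0 j ∧ t0 j ≤ n) (hbd1 : ∀ k, 1 ≤ t1 k ∧ t1 k ≤ n)
    (hspan1 : Submodule.span ℂ (Set.range fun k =>
        stdv n (t1 k) + ∑ i ∈ freePos n dl1 t1 k, a1 i k • stdv n i) = V1)
    (hprmem : ∀ j : Fin dl0, pr n (dl0 + 1) dl1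
        (stdv n (t0 j) + ∑ i ∈ freePos n dl0 t0 j, a0 i j • stdv n i) ∈ V1)
    (j : Fin dl0) (hxout : t0 j ≤ dl0 ∨ dl1 < t0 j) :
    ∃ k, t1 k = t0 j := by
  set e : Fin n → ℂ :=
    stdv n (t0 j) + ∑ i ∈ freePos n dl0 t0 j, a0 i j • stdv n i with he
  have hwV : pr n (dl0 + 1) dl1 e ∈ Submodule.span ℂ (Set.range fun k =>
      stdv n (t1 k) + ∑ i ∈ freePos n dl1 t1 k, a1 i k • stdv n i) := by
    rw [hspan1]; exact hprmem j
  set w := pr n (dl0 + 1) dl1 e with hwdef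
  have hx1 : 1 ≤ t0 j := (hbd0 j).1
  have hxn : t0 j ≤ n := (hbd0 j).2
  set m := t0 j with hm
  set im : Fin n := ⟨m - 1, by omega⟩ with him
  have him1 : (im : ℕ) + 1 = m := by simp [him]; omega
  have hnf : m ∉ freePos n dl0 t0 j := fun hmem => (freePos_not_pivot hmem) rfl
  have hwm : w im = 1 := by
    rw [hwdef, pr_apply]
    have hcond : ¬ (dl0 + 1 ≤ (im : ℕ) + 1 ∧ (im : ℕ) + 1 ≤ dl1) := by
      rw [him1]; omega
    rw [if_neg hcond, he, normal_coord, him1, if_pos rfl, if_neg hnf, add_zero]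
  have hvan : ∀ i : Fin n, rk n dl1 m < rk n dl1 ((i : ℕ) + 1) → w i = 0 := by
    intro i hi
    rw [hwdef, pr_apply]
    split_ifs with hcond
    · rfl
    · rw [not_and_or, not_le, not_le] at hcond
      have h1 : (i : ℕ) + 1 ≠ m := by
        intro hh; rw [hh] at hi; omega
      have h2 : (i : ℕ) + 1 ∉ freePos n dl0 t0 j := by
        intro hmem
        have hr := rk_freePos hx1 hmem
        have hiout : (i : ℕ) + 1 ≤ dl0 ∨ dl1 < (i : ℕ) + 1 := by omega
        have hin : (i : ℕ) + 1 ≤ n := i.isLt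
        have := rk_mono n dl0 dl1 ((i : ℕ) + 1) m hdd (by omega) hin hx1 hxn
          hiout hxout hr
        omega
      rw [he, normal_coord, if_neg h1, if_neg h2, add_zero]
  exact leading_pivot dl1 t1 hinj1 (freePos n dl1 t1)
    (fun k i hi => rk_freePos (hbd1 k).1 hi)
    (fun k i hi k' => freePos_not_pivot hi) a1 w hwV m im him1
    (by rw [hwm]; norm_num) hvan hbd1

/-- Let `1 ≤ d_1 < … < d_s ≤ n-1` and let `V_1, …, V_s ⊆ ℂⁿ` with
`dim V_l = d_l` satisfy `pr_{d_l+1, d_{l+1}}(V_l) ⊆ V_{l+1}`. If `I^l` is the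
pivot set of `V_l`, i.e. the set of entries of the increasing tuple `t l` such
that `V_l` has a normal-form basis `e_j = v_{(t l)_j} + Σ_{i ∈ F_j} a_{i,j} v_i`,
then `I^l \ {d_l+1, …, d_{l+1}} ⊆ I^{l+1}` for all `l = 1, …, s-1`. -/
theorem pivot_sets_satisfy_chain_condition (n s : ℕ) (d : Fin s → ℕ)
    (hmono : StrictMono d) (hd1 : ∀ l, 1 ≤ d l) (hdn : ∀ l, d l ≤ n - 1)
    (V : Fin s → Submodule ℂ (Fin n → ℂ))
    (hdim : ∀ l, Module.finrank ℂ (V l) = d l)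
    (hpr : ∀ (l : ℕ) (h : l + 1 < s),
      Submodule.map (pr n (d ⟨l, by omega⟩ + 1) (d ⟨l + 1, h⟩)) (V ⟨l, by omega⟩)
        ≤ V ⟨l + 1, h⟩)
    (t : ∀ l : Fin s, Fin (d l) → ℕ) (a : ∀ l : Fin s, ℕ → Fin (d l) → ℂ)
    (hmonot : ∀ l, StrictMono (t l))
    (hbd : ∀ l j, 1 ≤ t l j ∧ t l j ≤ n)
    (hsupp : ∀ l i j, i ∉ freePos n (d l) (t l) j → a l i j = 0)
    (hbasis : ∀ l, LinearIndependent ℂ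
        (fun j => stdv n (t l j) + ∑ i ∈ freePos n (d l) (t l) j, a l i j • stdv n i) ∧
      Submodule.span ℂ (Set.range fun j =>
        stdv n (t l j) + ∑ i ∈ freePos n (d l) (t l) j, a l i j • stdv n i) = V l) :
    ∀ (l : ℕ) (h : l + 1 < s),
      Finset.image (t ⟨l, by omega⟩) Finset.univ \
          Finset.Icc (d ⟨l, by omega⟩ + 1) (d ⟨l + 1, h⟩)
        ⊆ Finset.image (t ⟨l + 1, h⟩) Finset.univ := by
  intro l h x hx
  rw [Finset.mem_sdiff, Finset.mem_image] at hx
  obtain ⟨⟨j, -, hj⟩, hxnot⟩ := hx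
  rw [Finset.mem_Icc, not_and_or, not_le, not_le] at hxnot
  have hls : l < s := by omega
  have hj' : t ⟨l, hls⟩ j = x := hj
  have hxnot' : x ≤ d ⟨l, hls⟩ ∨ d ⟨l + 1, h⟩ < x := by
    rcases hxnot with h1 | h1
    · exact Or.inl (Nat.lt_succ_iff.mp h1)
    · exact Or.inr h1
  have hdd : d ⟨l, hls⟩ < d ⟨l + 1, h⟩ := hmono (by simp [Fin.lt_def])
  have hprmem : ∀ j : Fin (d ⟨l, hls⟩), pr n (d ⟨l, hls⟩ + 1) (d ⟨l + 1, h⟩)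
      (stdv n (t ⟨l, hls⟩ j) +
        ∑ i ∈ freePos n (d ⟨l, hls⟩) (t ⟨l, hls⟩) j, a ⟨l, hls⟩ i j • stdv n i)
      ∈ V ⟨l + 1, h⟩ := by
    intro j
    refine hpr l h (Submodule.mem_map_of_mem ?_)
    rw [← (hbasis ⟨l, hls⟩).2]
    exact Submodule.subset_span ⟨j, rfl⟩
  obtain ⟨k, hk⟩ := chain_step n (d ⟨l, hls⟩) (d ⟨l + 1, h⟩) (t ⟨l, hls⟩)
    (t ⟨l + 1, h⟩) (a ⟨l, hls⟩) (a ⟨l + 1, h⟩) (V ⟨l + 1, h⟩) hdd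
    (hmonot ⟨l + 1, h⟩).injective (hbd ⟨l, hls⟩) (hbd ⟨l + 1, h⟩)
    (hbasis ⟨l + 1, h⟩).2 hprmem j (by rw [hj']; exact hxnot')
  exact Finset.mem_image.2 ⟨k, Finset.mem_univ k, hk.trans hj'⟩
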